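/- arXiv:1006.1795 — 3 statements merged into one kernel-verified Lean document; each statement's English description precedes it below -/
import Mathlib

section
/- If gₙ : Ω → ℝ are measurable functions with gₙ → g almost everywhere, sup_{n≥1}|gₙ| is integrable, and T is an ergodic measure preserving transformation on the probability space (Ω, 𝒜, μ), then (1/n) Σ_{k=1}^n gₙ₋ₖ₊₁ ∘ Tᵏ → ∫_Ω g dμ almost everywhere. -/
/-!
Birkhoff's pointwise ergodic theorem follows from the maximal ergodic inequality (Garsia's
argument): when `∫ f < 0`, the `T`-invariant set on which the Birkhoff sums of `f` are
unbounded above would, if conull, contradict the maximal inequality, so by ergodicity it is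
null.

For the triangular averages put `hₘ = sup_{j > m} |g_j - g|` and `D = sup_{n ≥ 1} |gₙ| + |g|`.
Splitting `∑_{k=1}^n |g_{n-k+1} ∘ Tᵏ - g ∘ Tᵏ|` at `k = n - m`, the first terms are bounded
by `hₘ ∘ Tᵏ` and the last `m` terms by `D ∘ Tᵏ`. By Birkhoff's theorem the averages of the
first bound tend to `∫ hₘ` and those of the second to `0`, while `∫ hₘ → 0` by dominated
convergence.
-/

open MeasureTheory Filter Finset Topology

section MaximalErgodic

variable {α : Type*} {T : α → α} {f : α → ℝ}

variable (T f) in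
/-- `birkhoffMax T f n x = max {birkhoffSum T f k x | k ≤ n}`. -/
noncomputable def birkhoffMax : ℕ → α → ℝ
  | 0 => fun _ => 0
  | n + 1 => fun x => max 0 (f x + birkhoffMax n (T x))

lemma birkhoffMax_succ (n : ℕ) (x : α) :
    birkhoffMax T f (n + 1) x = max 0 (f x + birkhoffMax T f n (T x)) := rfl

lemma birkhoffMax_nonneg (n : ℕ) (x : α) : 0 ≤ birkhoffMax T f n x := by
  cases n
  · rfl
  · exact le_max_left _ _

lemma birkhoffMax_le_succ (n : ℕ) (x : α) :
    birkhoffMax T f n x ≤ birkhoffMax T f (n + 1) x := by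
  induction n generalizing x with
  | zero => exact birkhoffMax_nonneg 1 x
  | succ n ih => exact max_le_max le_rfl (add_le_add le_rfl (ih (T x)))

lemma monotone_birkhoffMax (x : α) : Monotone fun n => birkhoffMax T f n x :=
  monotone_nat_of_le_succ fun n => birkhoffMax_le_succ n x

lemma birkhoffSum_le_birkhoffMax {k n : ℕ} (hkn : k ≤ n) (x : α) :
    birkhoffSum T f k x ≤ birkhoffMax T f n x := by
  induction k generalizing n x with
  | zero => exact birkhoffMax_nonneg n x
  | succ k ih =>
    obtain ⟨n, rfl⟩ : ∃ m, n = m + 1 := ⟨n - 1, by omega⟩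
    rw [birkhoffSum_succ', birkhoffMax_succ]
    exact le_max_of_le_right (add_le_add le_rfl (ih (by omega) (T x)))

lemma exists_birkhoffSum_eq_birkhoffMax (n : ℕ) (x : α) :
    ∃ k ≤ n, birkhoffSum T f k x = birkhoffMax T f n x := by
  induction n generalizing x with
  | zero => exact ⟨0, le_rfl, rfl⟩
  | succ n ih =>
    obtain ⟨k, hkn, hk⟩ := ih (T x)
    rw [birkhoffMax_succ, ← hk]
    rcases max_choice 0 (f x + birkhoffSum T f k (T x)) with h | h
    · exact ⟨0, Nat.zero_le _, h.symm⟩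
    · exact ⟨k + 1, by omega, by rw [h, birkhoffSum_succ']⟩

lemma birkhoffMax_le_birkhoffSum_abs (n : ℕ) (x : α) :
    birkhoffMax T f n x ≤ birkhoffSum T (fun y => |f y|) n x := by
  induction n generalizing x with
  | zero => rfl
  | succ n ih =>
    rw [birkhoffMax_succ, birkhoffSum_succ']
    exact max_le (add_nonneg (abs_nonneg _) (sum_nonneg fun _ _ => abs_nonneg _))
      (add_le_add (le_abs_self _) (ih (T x)))

lemma sub_birkhoffMax_comp_le_indicator (n : ℕ) (x : α) :
    birkhoffMax T f (n + 1) x - birkhoffMax T f n (T x) ≤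
      {y | 0 < birkhoffMax T f (n + 1) y}.indicator f x := by
  rw [Set.indicator_apply]
  split_ifs with hx
  · rw [Set.mem_ofPred_eq, birkhoffMax_succ, lt_max_iff, lt_self_iff_false, false_or] at hx
    rw [birkhoffMax_succ, max_eq_right hx.le, add_sub_cancel_right]
  · rw [(birkhoffMax_nonneg (n + 1) x).antisymm (not_lt.1 hx)]
    linarith [birkhoffMax_nonneg (T := T) (f := f) n (T x)]

lemma iUnion_setOf_birkhoffMax_pos :
    ⋃ n, {x | 0 < birkhoffMax T f n x} = {x | ∃ n, 0 < birkhoffSum T f n x} := by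
  ext x
  simp only [Set.mem_iUnion, Set.mem_ofPred_eq]
  constructor
  · rintro ⟨n, hn⟩
    obtain ⟨k, -, hk⟩ := exists_birkhoffSum_eq_birkhoffMax (T := T) (f := f) n x
    exact ⟨k, hk ▸ hn⟩
  · rintro ⟨n, hn⟩
    exact ⟨n, hn.trans_le (birkhoffSum_le_birkhoffMax le_rfl x)⟩

variable [MeasurableSpace α] {μ : Measure α}

lemma measurable_birkhoffMax (hT : Measurable T) (hf : Measurable f) (n : ℕ) :
    Measurable (birkhoffMax T f n) := by
  induction n with
  | zero => exact measurable_const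
  | succ n ih => exact measurable_const.max (hf.add (ih.comp hT))

lemma integrable_birkhoffSum (hT : MeasurePreserving T μ μ) (hf : Integrable f μ) (n : ℕ) :
    Integrable (birkhoffSum T f n) μ :=
  integrable_finsetSum _ fun k _ => (hT.iterate k).integrable_comp_of_integrable hf

lemma integrable_birkhoffMax (hT : MeasurePreserving T μ μ) (hf : Measurable f)
    (hfi : Integrable f μ) (n : ℕ) : Integrable (birkhoffMax T f n) μ :=
  (integrable_birkhoffSum hT hfi.abs n).mono'
    (measurable_birkhoffMax hT.measurable hf n).aestronglyMeasurable <|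
    Eventually.of_forall fun x => by
      rw [Real.norm_of_nonneg (birkhoffMax_nonneg n x)]
      exact birkhoffMax_le_birkhoffSum_abs n x

/-- The maximal ergodic inequality. -/
theorem setIntegral_setOf_exists_birkhoffSum_pos_nonneg (hT : MeasurePreserving T μ μ)
    (hf : Measurable f) (hfi : Integrable f μ) :
    0 ≤ ∫ x in {x | ∃ n, 0 < birkhoffSum T f n x}, f x ∂μ := by
  set P : ℕ → Set α := fun n => {x | 0 < birkhoffMax T f n x}
  have hPm (n : ℕ) : MeasurableSet (P n) :=
    measurableSet_lt measurable_const (measurable_birkhoffMax hT.measurable hf n)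
  have hPmono : Monotone P := fun m n hmn x (hx : 0 < _) =>
    hx.trans_le (monotone_birkhoffMax x hmn)
  have hM := integrable_birkhoffMax hT hf hfi
  have hP (n : ℕ) : 0 ≤ ∫ x in P (n + 1), f x ∂μ := by
    have hMT : Integrable (fun x => birkhoffMax T f n (T x)) μ :=
      hT.integrable_comp_of_integrable (hM n)
    calc
      0 ≤ ∫ x, birkhoffMax T f (n + 1) x ∂μ - ∫ x, birkhoffMax T f n x ∂μ :=
        sub_nonneg.2 (integral_mono (hM n) (hM (n + 1)) (birkhoffMax_le_succ n))
      _ = ∫ x, (birkhoffMax T f (n + 1) x - birkhoffMax T f n (T x)) ∂μ := by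
        rw [integral_sub (hM _) hMT, ← integral_map hT.aemeasurable
          (by rw [hT.map_eq]; exact (hM n).aestronglyMeasurable), hT.map_eq]
      _ ≤ ∫ x, (P (n + 1)).indicator f x ∂μ :=
        integral_mono ((hM _).sub hMT) (hfi.indicator (hPm _))
          (sub_birkhoffMax_comp_le_indicator n)
      _ = ∫ x in P (n + 1), f x ∂μ := integral_indicator (hPm _)
  have hlim := tendsto_setIntegral_of_monotone hPm hPmono hfi.integrableOn
  rw [iUnion_setOf_birkhoffMax_pos] at hlim
  exact ge_of_tendsto' (hlim.comp (tendsto_add_atTop_nat 1)) hP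

end MaximalErgodic

section Birkhoff

variable {α : Type*} {T : α → α} {f : α → ℝ}

lemma bddAbove_range_birkhoffSum_apply_iff (x : α) :
    BddAbove (Set.range fun n => birkhoffSum T f n (T x)) ↔
      BddAbove (Set.range fun n => birkhoffSum T f n x) := by
  simp only [bddAbove_def, Set.forall_mem_range]
  constructor
  · rintro ⟨M, hM⟩
    refine ⟨max 0 (f x + M), fun n => ?_⟩
    cases n with
    | zero => exact le_max_left _ _
    | succ n =>
      exact (birkhoffSum_succ' T f n x).trans_le (le_max_of_le_right (by linarith [hM n]))
  · rintro ⟨M, hM⟩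
    refine ⟨M - f x, fun n => ?_⟩
    linarith [hM (n + 1), birkhoffSum_succ' T f n x]

variable [MeasurableSpace α] {μ : Measure α}

lemma ae_bddAbove_range_birkhoffSum (hT : Ergodic T μ) (hf : Measurable f)
    (hfi : Integrable f μ) (hneg : ∫ x, f x ∂μ < 0) :
    ∀ᵐ x ∂μ, BddAbove (Set.range fun n => birkhoffSum T f n x) := by
  set B := {x | BddAbove (Set.range fun n => birkhoffSum T f n x)}
  have hBm : MeasurableSet B :=
    measurableSet_bddAbove_range fun n => Finset.measurable_sum _ fun k _ =>
      hf.comp (hT.measurable.iterate k)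
  have hBinv : T ⁻¹' B = B := Set.ext bddAbove_range_birkhoffSum_apply_iff
  refine (hT.toPreErgodic.ae_mem_or_ae_notMem hBm hBinv).resolve_right fun hunb => ?_
  have hpos : {x | ∃ n, 0 < birkhoffSum T f n x} =ᵐ[μ] (Set.univ : Set α) :=
    eventuallyEq_univ.2 <| hunb.mono fun x hx => by
      by_contra! h
      exact hx ⟨0, Set.forall_mem_range.2 h⟩
  have := setIntegral_setOf_exists_birkhoffSum_pos_nonneg hT.toMeasurePreserving hf hfi
  rw [setIntegral_congr_set hpos, setIntegral_univ] at this
  exact this.not_gt hneg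

lemma ae_eventually_birkhoffAverage_lt [IsProbabilityMeasure μ] (hT : Ergodic T μ)
    (hf : Measurable f) (hfi : Integrable f μ) {c : ℝ} (hc : ∫ x, f x ∂μ < c) :
    ∀ᵐ x ∂μ, ∀ᶠ n in atTop, birkhoffAverage ℝ T f n x < c := by
  obtain ⟨c', hfc', hc'c⟩ := exists_between hc
  have hneg : ∫ x, (f x - c') ∂μ < 0 := by
    rw [integral_sub hfi (integrable_const c'), integral_const, probReal_univ, one_smul]
    linarith
  filter_upwards [ae_bddAbove_range_birkhoffSum hT (hf.sub measurable_const)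
    (hfi.sub (integrable_const c')) hneg] with x ⟨M, hM⟩
  have hS (n : ℕ) : birkhoffSum T f n x ≤ n * c' + M := by
    have : birkhoffSum T (f - fun _ => c') n x ≤ M := hM ⟨n, rfl⟩
    simp only [birkhoffSum, Pi.sub_apply, sum_sub_distrib, sum_const, card_range,
      nsmul_eq_mul] at this ⊢
    linarith
  have hlim : Tendsto (fun n : ℕ => c' + M / n) atTop (𝓝 c') := by
    simpa using tendsto_const_nhds.add (tendsto_const_div_atTop_nhds_zero_nat M)
  filter_upwards [hlim.eventually_lt_const hc'c, eventually_gt_atTop 0] with n hn hn0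
  have hn0' : (0 : ℝ) < n := Nat.cast_pos.2 hn0
  calc birkhoffAverage ℝ T f n x = birkhoffSum T f n x / n := by
        rw [birkhoffAverage, smul_eq_mul, inv_mul_eq_div]
    _ ≤ (n * c' + M) / n := by gcongr; exact hS n
    _ = c' + M / n := by field_simp
    _ < c := hn

theorem ae_tendsto_birkhoffAverage [IsProbabilityMeasure μ] (hT : Ergodic T μ)
    (hf : Measurable f) (hfi : Integrable f μ) :
    ∀ᵐ x ∂μ, Tendsto (fun n => birkhoffAverage ℝ T f n x) atTop (𝓝 (∫ x, f x ∂μ)) := by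
  have hupper : ∀ᵐ x ∂μ, ∀ q : {q : ℚ // ∫ x, f x ∂μ < q},
      ∀ᶠ n in atTop, birkhoffAverage ℝ T f n x < q :=
    ae_all_iff.2 fun q => ae_eventually_birkhoffAverage_lt hT hf hfi q.2
  have hlower : ∀ᵐ x ∂μ, ∀ q : {q : ℚ // (q : ℝ) < ∫ x, f x ∂μ},
      ∀ᶠ n in atTop, q < birkhoffAverage ℝ T f n x := by
    refine ae_all_iff.2 fun q => ?_
    have hq : ∫ x, (-f) x ∂μ < -q := by rw [integral_neg']; linarith [q.2]
    filter_upwards [ae_eventually_birkhoffAverage_lt hT hf.neg hfi.neg hq] with x hx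
    filter_upwards [hx] with n hn
    rw [birkhoffAverage_neg, Pi.neg_apply, Pi.neg_apply, neg_lt_neg_iff] at hn
    exact hn
  filter_upwards [hupper, hlower] with x hxu hxl
  refine tendsto_order.2 ⟨fun a ha => ?_, fun a ha => ?_⟩
  · obtain ⟨q, haq, hq⟩ := exists_rat_btwn ha
    exact (hxl ⟨q, hq⟩).mono fun n hn => haq.trans hn
  · obtain ⟨q, hq, hqa⟩ := exists_rat_btwn ha
    exact (hxu ⟨q, hq⟩).mono fun n hn => hn.trans hqa

end Birkhoff

section Triangular

lemma sum_Icc_iterate_eq_birkhoffSum {α M : Type*} [AddCommMonoid M] (T : α → α) (φ : α → M)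
    (n : ℕ) (x : α) : ∑ k ∈ Icc 1 n, φ (T^[k] x) = birkhoffSum T φ n (T x) := by
  induction n with
  | zero => simp
  | succ n ih =>
    rw [sum_Icc_succ_top (by omega), ih, birkhoffSum_succ, Function.iterate_succ_apply]

lemma tendsto_sub_sub_div_of_tendsto_div {c : ℕ → ℝ} {L : ℝ}
    (hc : Tendsto (fun n => c n / n) atTop (𝓝 L)) (m : ℕ) :
    Tendsto (fun n => (c n - c (n - m)) / n) atTop (𝓝 0) := by
  have hratio : Tendsto (fun n => ((n - m : ℕ) : ℝ) / n) atTop (𝓝 1) := by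
    refine ((tendsto_natCast_div_add_atTop (m : ℝ)).comp (tendsto_sub_atTop_nat m)).congr' ?_
    filter_upwards [eventually_ge_atTop m] with n hn
    simp [Nat.cast_sub hn]
  have hshift : Tendsto (fun n => c (n - m) / n) atTop (𝓝 L) := by
    have h := (hc.comp (tendsto_sub_atTop_nat m)).mul hratio
    rw [mul_one] at h
    refine h.congr' ?_
    filter_upwards [eventually_gt_atTop m] with n hn
    simp only [Function.comp_apply]
    rw [div_mul_div_cancel₀ (by exact_mod_cast (Nat.sub_pos_of_lt hn).ne')]
  simpa only [sub_div, sub_self] using hc.sub hshift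

variable {e H : ℕ → ℕ → ℝ} {d : ℕ → ℝ}

lemma sum_Icc_antidiagonal_le (heH : ∀ m j k, m < j → e j k ≤ H m k)
    (hed : ∀ j k, e (j + 1) k ≤ d k) (hH : ∀ m k, 0 ≤ H m k) (m n : ℕ) :
    ∑ k ∈ Icc 1 n, e (n - k + 1) k ≤
      ∑ k ∈ Icc 1 n, H m k + (∑ k ∈ Icc 1 n, d k - ∑ k ∈ Icc 1 (n - m), d k) := by
  have hsub : Icc 1 (n - m) ⊆ Icc 1 n := Icc_subset_Icc_right (Nat.sub_le n m)
  rw [← sum_sdiff hsub, ← sum_sdiff hsub (f := d), add_sub_cancel_right, add_comm]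
  gcongr with k
  · calc ∑ k ∈ Icc 1 (n - m), e (n - k + 1) k ≤ ∑ k ∈ Icc 1 (n - m), H m k :=
          sum_le_sum fun k hk => heH m _ k (by rw [mem_Icc] at hk; omega)
      _ ≤ ∑ k ∈ Icc 1 n, H m k := sum_le_sum_of_subset_of_nonneg hsub fun k _ _ => hH m k
  · exact hed _ k

theorem tendsto_sum_Icc_antidiagonal_div (he : ∀ j k, 0 ≤ e j k)
    (heH : ∀ m j k, m < j → e j k ≤ H m k) (hed : ∀ j k, e (j + 1) k ≤ d k)
    (hH : ∀ m k, 0 ≤ H m k) {a : ℕ → ℝ} {L : ℝ}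
    (hHa : ∀ m, Tendsto (fun n => (∑ k ∈ Icc 1 n, H m k) / n) atTop (𝓝 (a m)))
    (ha : Tendsto a atTop (𝓝 0))
    (hd : Tendsto (fun n => (∑ k ∈ Icc 1 n, d k) / n) atTop (𝓝 L)) :
    Tendsto (fun n => (∑ k ∈ Icc 1 n, e (n - k + 1) k) / n) atTop (𝓝 0) := by
  refine tendsto_order.2 ⟨fun b hb => Eventually.of_forall fun n =>
    hb.trans_le (div_nonneg (sum_nonneg fun k _ => he _ k) n.cast_nonneg), fun ε hε => ?_⟩
  obtain ⟨m, hm⟩ := (ha.eventually_lt_const (half_pos hε)).exists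
  filter_upwards [(hHa m).eventually_lt_const hm,
    (tendsto_sub_sub_div_of_tendsto_div hd m).eventually_lt_const (half_pos hε)] with n hHn hdn
  calc (∑ k ∈ Icc 1 n, e (n - k + 1) k) / n
      ≤ (∑ k ∈ Icc 1 n, H m k + (∑ k ∈ Icc 1 n, d k - ∑ k ∈ Icc 1 (n - m), d k)) / n := by
        gcongr; exact sum_Icc_antidiagonal_le heH hed hH m n
    _ < ε / 2 + ε / 2 := by rw [add_div]; exact add_lt_add hHn hdn
    _ = ε := add_halves ε

end Triangular

section TailSup

/- A real `⨆` of an unbounded family is `0`; convergence of `u` provides the boundedness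
that `le_ciSup` needs. -/

variable {u : ℕ → ℝ} {l : ℝ}

lemma abs_le_iSup_abs_succ (hu : Tendsto u atTop (𝓝 l)) (n : ℕ) :
    |u (n + 1)| ≤ ⨆ n, |u (n + 1)| :=
  le_ciSup (hu.comp (tendsto_add_atTop_nat 1)).abs.bddAbove_range n

lemma abs_le_iSup_abs_succ_of_tendsto (hu : Tendsto u atTop (𝓝 l)) :
    |l| ≤ ⨆ n, |u (n + 1)| :=
  le_of_tendsto' (hu.comp (tendsto_add_atTop_nat 1)).abs (abs_le_iSup_abs_succ hu)

lemma abs_sub_le_iSup_abs_succ_add_abs (hu : Tendsto u atTop (𝓝 l)) (n : ℕ) :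
    |u (n + 1) - l| ≤ (⨆ n, |u (n + 1)|) + |l| :=
  (abs_sub _ _).trans (add_le_add (abs_le_iSup_abs_succ hu n) le_rfl)

lemma abs_sub_le_iSup_abs_sub (hu : Tendsto u atTop (𝓝 l)) {m j : ℕ} (hmj : m < j) :
    |u j - l| ≤ ⨆ i, |u (i + (m + 1)) - l| := by
  obtain ⟨i, rfl⟩ := Nat.exists_eq_add_of_le' hmj
  exact le_ciSup (((hu.comp (tendsto_add_atTop_nat (m + 1))).sub_const l).abs.bddAbove_range) i

lemma iSup_abs_sub_le (hu : Tendsto u atTop (𝓝 l)) (m : ℕ) :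
    ⨆ i, |u (i + (m + 1)) - l| ≤ (⨆ n, |u (n + 1)|) + |l| :=
  ciSup_le fun i => abs_sub_le_iSup_abs_succ_add_abs hu (i + m)

lemma tendsto_iSup_abs_sub (hu : Tendsto u atTop (𝓝 l)) :
    Tendsto (fun m => ⨆ i, |u (i + (m + 1)) - l|) atTop (𝓝 0) := by
  refine tendsto_order.2 ⟨fun b hb => Eventually.of_forall fun m =>
    hb.trans_le (Real.iSup_nonneg fun _ => abs_nonneg _), fun ε hε => ?_⟩
  obtain ⟨N, hN⟩ := Metric.tendsto_atTop.1 hu (ε / 2) (half_pos hε)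
  filter_upwards [eventually_ge_atTop N] with m hm
  refine (ciSup_le fun i => ?_).trans_lt (half_lt_self hε)
  exact (hN _ (by omega)).le

end TailSup

section Integrability

variable {α : Type*} [MeasurableSpace α] {μ : Measure α} {g : ℕ → α → ℝ} {glim : α → ℝ}

lemma integrable_of_tendsto_of_integrable_iSup_abs (hglim : AEStronglyMeasurable glim μ)
    (hconv : ∀ᵐ x ∂μ, Tendsto (fun n => g n x) atTop (𝓝 (glim x)))
    (hsup : Integrable (fun x => ⨆ n, |g (n + 1) x|) μ) : Integrable glim μ :=
  hsup.mono' hglim <| hconv.mono fun _ hx => abs_le_iSup_abs_succ_of_tendsto hx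

lemma ae_norm_iSup_abs_sub_le
    (hconv : ∀ᵐ x ∂μ, Tendsto (fun n => g n x) atTop (𝓝 (glim x))) (m : ℕ) : ∀ᵐ x ∂μ,
      ‖⨆ i, |g (i + (m + 1)) x - glim x|‖ ≤ (⨆ n, |g (n + 1) x|) + |glim x| :=
  hconv.mono fun _ hx => by
    rw [Real.norm_of_nonneg (Real.iSup_nonneg fun _ => abs_nonneg _)]
    exact iSup_abs_sub_le hx m

variable (hg : ∀ n, Measurable (g n)) (hglim : Measurable glim)
  (hconv : ∀ᵐ x ∂μ, Tendsto (fun n => g n x) atTop (𝓝 (glim x)))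
  (hsup : Integrable (fun x => ⨆ n, |g (n + 1) x|) μ)
include hg hglim hconv hsup

lemma integrable_iSup_abs_sub (m : ℕ) :
    Integrable (fun x => ⨆ i, |g (i + (m + 1)) x - glim x|) μ :=
  (hsup.add (integrable_of_tendsto_of_integrable_iSup_abs hglim.aestronglyMeasurable
    hconv hsup).abs).mono'
    (Measurable.iSup fun _ => ((hg _).sub hglim).abs).aestronglyMeasurable
    (ae_norm_iSup_abs_sub_le hconv m)

lemma tendsto_integral_iSup_abs_sub :
    Tendsto (fun m => ∫ x, ⨆ i, |g (i + (m + 1)) x - glim x| ∂μ) atTop (𝓝 0) := by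
  have := tendsto_integral_of_dominated_convergence _
    (fun m => (integrable_iSup_abs_sub hg hglim hconv hsup m).aestronglyMeasurable)
    (hsup.add (integrable_of_tendsto_of_integrable_iSup_abs hglim.aestronglyMeasurable
      hconv hsup).abs)
    (ae_norm_iSup_abs_sub_le hconv)
    (hconv.mono fun x hx => tendsto_iSup_abs_sub (u := (g · x)) hx)
  rwa [integral_zero] at this

end Integrability

section Main

variable {α : Type*} [MeasurableSpace α] {μ : Measure α} [IsProbabilityMeasure μ] {T : α → α}

theorem ae_tendsto_sum_Icc_iterate_div (hT : Ergodic T μ) {f : α → ℝ} (hf : Measurable f)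
    (hfi : Integrable f μ) :
    ∀ᵐ x ∂μ, Tendsto (fun n => (∑ k ∈ Icc 1 n, f (T^[k] x)) / n) atTop (𝓝 (∫ x, f x ∂μ)) := by
  filter_upwards [hT.quasiMeasurePreserving.ae (ae_tendsto_birkhoffAverage hT hf hfi)] with x hx
  simpa only [sum_Icc_iterate_eq_birkhoffSum, birkhoffAverage, smul_eq_mul, inv_mul_eq_div]
    using hx

theorem ae_tendsto_sum_Icc_antidiagonal_div (hT : Ergodic T μ) {g : ℕ → α → ℝ}
    (hg : ∀ n, Measurable (g n)) {glim : α → ℝ} (hglim : Measurable glim)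
    (hconv : ∀ᵐ x ∂μ, Tendsto (fun n => g n x) atTop (𝓝 (glim x)))
    (hsup : Integrable (fun x => ⨆ n, |g (n + 1) x|) μ) :
    ∀ᵐ x ∂μ, Tendsto (fun n => (∑ k ∈ Icc 1 n, g (n - k + 1) (T^[k] x)) / n) atTop
      (𝓝 (∫ x, glim x ∂μ)) := by
  set h : ℕ → α → ℝ := fun m x => ⨆ i, |g (i + (m + 1)) x - glim x|
  set D : α → ℝ := fun x => (⨆ n, |g (n + 1) x|) + |glim x|
  have hglim_int := integrable_of_tendsto_of_integrable_iSup_abs hglim.aestronglyMeasurable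
    hconv hsup
  have hconv_iter :
      ∀ᵐ x ∂μ, ∀ k, Tendsto (fun n => g n (T^[k] x)) atTop (𝓝 (glim (T^[k] x))) :=
    ae_all_iff.2 fun k => (hT.toMeasurePreserving.iterate k).quasiMeasurePreserving.ae hconv
  filter_upwards [hconv_iter, ae_tendsto_sum_Icc_iterate_div hT hglim hglim_int,
    ae_all_iff.2 fun m => ae_tendsto_sum_Icc_iterate_div hT
      (Measurable.iSup fun _ => ((hg _).sub hglim).abs)
      (integrable_iSup_abs_sub hg hglim hconv hsup m),
    ae_tendsto_sum_Icc_iterate_div hT ((Measurable.iSup fun _ => (hg _).abs).add hglim.abs)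
      (hsup.add hglim_int.abs)] with x hx hx_glim hx_h hx_D
  have herr := tendsto_sum_Icc_antidiagonal_div
    (e := fun j k => |g j (T^[k] x) - glim (T^[k] x)|) (H := fun m k => h m (T^[k] x))
    (d := fun k => D (T^[k] x)) (fun _ _ => abs_nonneg _)
    (fun m _ k hmj => abs_sub_le_iSup_abs_sub (hx k) hmj)
    (fun j k => abs_sub_le_iSup_abs_succ_add_abs (hx k) j)
    (fun _ _ => Real.iSup_nonneg fun _ => abs_nonneg _) hx_h
    (tendsto_integral_iSup_abs_sub hg hglim hconv hsup) hx_D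
  have hdiff : Tendsto (fun n => (∑ k ∈ Icc 1 n, g (n - k + 1) (T^[k] x)) / n -
      (∑ k ∈ Icc 1 n, glim (T^[k] x)) / n) atTop (𝓝 0) := by
    refine squeeze_zero_norm (fun n => ?_) herr
    rw [← sub_div, ← sum_sub_distrib, Real.norm_eq_abs, abs_div, Nat.abs_cast]
    gcongr
    exact abs_sum_le_sum_abs _ _
  simpa using hx_glim.add hdiff

end Main

/-- Triangular pointwise ergodic lemma: if `gₙ → g` a.e., `sup_{n ≥ 1} |gₙ|` is
integrable and `T` is ergodic measure preserving, then
`(1/n) ∑_{k=1}^n g_{n-k+1} ∘ Tᵏ → ∫ g dμ` almost everywhere. -/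
theorem coboundary_paper_stmt5
    {Ω : Type*} [MeasurableSpace Ω] (μ : Measure Ω) [IsProbabilityMeasure μ]
    (T : Ω → Ω) (hT : Ergodic T μ)
    (g : ℕ → Ω → ℝ) (hmeas : ∀ n, Measurable (g n))
    (glim : Ω → ℝ)
    (hconv : ∀ᵐ ω ∂μ, Tendsto (fun n => g n ω) atTop (nhds (glim ω)))
    (hsup : Integrable (fun ω => ⨆ n : ℕ, |g (n + 1) ω|) μ) :
    ∀ᵐ ω ∂μ, Tendsto
      (fun n : ℕ => (∑ k ∈ Finset.Icc 1 n, g (n - k + 1) (T^[k] ω)) / n)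
      atTop (nhds (∫ ω, glim ω ∂μ)) := by
  have hglim :=
    aemeasurable_of_tendsto_metrizable_ae atTop (fun n => (hmeas n).aemeasurable) hconv
  have hconv' : ∀ᵐ ω ∂μ, Tendsto (fun n => g n ω) atTop (𝓝 (hglim.mk glim ω)) := by
    filter_upwards [hconv, hglim.ae_eq_mk] with ω hω hω_eq
    rwa [hω_eq] at hω
  rw [integral_congr_ae hglim.ae_eq_mk]
  exact ae_tendsto_sum_Icc_antidiagonal_div hT hmeas hglim.measurable_mk hconv' hsup
end

section
/- Let f ∈ L²(μ) be ℱ₀-measurable with mean zero, E(f | ℱ_{−∞}) = 0, and suppose Σ_{i≤0} ‖Pᵢf‖₂ < ∞ where Pᵢg = E(g|ℱᵢ) − E(g|ℱ_{i−1}). Then the decomposition Sₙ(f) − E(Sₙ(f)|ℱ₀) = Σ_{j=1}^n Uʲ g_{n−j+1} holds, where g_k = P₀(U⁻¹S_k(f)), and the summands Y_{n,j} = Uʲg_{n−j+1}/√n form a martingale difference array with respect to (ℱⱼ). -/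
open MeasureTheory Filter

/-! Write `Aⱼ = ∑_{m=j}^n Uᵐf`. The intertwining `Eⁱ(Uʲh) = Uʲ E^{i-j}h`, which holds because
`U` is measure preserving and `ℱᵢ₊ⱼ` is the pullback of `ℱᵢ` under `Tʲ`, turns `Uʲ g_{n-j+1}` into
`E(Aⱼ|ℱⱼ) - E(Aⱼ|ℱⱼ₋₁)`. As `Uʲf` is `ℱⱼ`-measurable, `E(Aⱼ|ℱⱼ) = Uʲf + E(Aⱼ₊₁|ℱⱼ)`, so the sum
over `j` telescopes to `Sₙ(f) - E(Sₙ(f)|ℱ₀)`. Each `g_k` is a `P₀`-difference, hence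
`ℱ₀`-measurable with vanishing conditional expectation given `ℱ₋₁`; the same intertwining moves
both properties to `Uʲ g_k` at levels `j` and `j - 1`. -/

section ChangeOfVariables

variable {α β : Type*} {m : MeasurableSpace β} {mα : MeasurableSpace α} {mβ : MeasurableSpace β}
  {μ : Measure α} {ν : Measure β} {S : α → β}

theorem condExp_comp_ae_eq_of_measurePreserving [IsFiniteMeasure μ]
    (hS : MeasurePreserving S μ ν) (hm : m ≤ mβ) {g : β → ℝ} (hg : Integrable g ν) :
    μ[g ∘ S | m.comap S] =ᵐ[μ] ν[g | m] ∘ S := by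
  have : IsFiniteMeasure ν := hS.map_eq ▸ inferInstance
  have hmS : m.comap S ≤ mα := (MeasurableSpace.comap_mono hm).trans hS.measurable.comap_le
  have hpush : ∀ h : β → ℝ, AEStronglyMeasurable h ν → ∀ t, MeasurableSet t →
      ∫ x in S ⁻¹' t, (h ∘ S) x ∂μ = ∫ y in t, h y ∂ν := fun h hh t ht => by
    rw [← hS.map_eq] at hh ⊢
    exact (setIntegral_map ht hh hS.measurable.aemeasurable).symm
  refine (ae_eq_condExp_of_forall_setIntegral_eq hmS
    (hS.integrable_comp_of_integrable hg) (fun _ _ _ => ?_) ?_ ?_).symm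
  · exact (hS.integrable_comp_of_integrable integrable_condExp).integrableOn
  · rintro _ ⟨t, ht, rfl⟩ _
    rw [hpush _ integrable_condExp.1 t (hm t ht), hpush _ hg.1 t (hm t ht),
      setIntegral_condExp hm hg ht]
  · exact (stronglyMeasurable_condExp.comp_measurable (comap_measurable S)).aestronglyMeasurable

end ChangeOfVariables

theorem condExp_condExp_sub_condExp_ae_eq_zero {Ω : Type*} {m₁ m₂ mΩ : MeasurableSpace Ω}
    {μ : Measure Ω} [IsFiniteMeasure μ] (h₁₂ : m₁ ≤ m₂) (h₂ : m₂ ≤ mΩ) (g : Ω → ℝ) :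
    μ[μ[g | m₂] - μ[g | m₁] | m₁] =ᵐ[μ] 0 := by
  filter_upwards [condExp_sub (integrable_condExp (m := m₂) (f := g))
      (integrable_condExp (m := m₁) (f := g)) m₁,
    condExp_condExp_of_le (f := g) h₁₂ h₂] with ω hsub htower
  rw [hsub, Pi.sub_apply, htower,
    condExp_of_stronglyMeasurable (h₁₂.trans h₂) stronglyMeasurable_condExp integrable_condExp]
  exact sub_self _

theorem condExp_div_const {Ω : Type*} {m mΩ : MeasurableSpace Ω} {μ : Measure Ω}
    (g : Ω → ℝ) (c : ℝ) : μ[fun ω => g ω / c | m] =ᵐ[μ] fun ω => μ[g | m] ω / c := by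
  have hg : (fun ω => g ω / c) = c⁻¹ • g := by
    ext ω
    simp [div_eq_inv_mul]
  rw [hg]
  filter_upwards [condExp_smul c⁻¹ g m] with ω hω
  rw [hω, Pi.smul_apply, smul_eq_mul, div_eq_inv_mul]

theorem Finset.sum_Icc_sub_pred {M : Type*} [AddCommGroup M] (C : ℕ → M) (n : ℕ) :
    ∑ j ∈ Finset.Icc 1 n, (C j - C (j - 1)) = C n - C 0 := by
  induction n with
  | zero => simp
  | succ n ih =>
    rw [Finset.sum_Icc_succ_top (by omega), ih, Nat.add_sub_cancel]
    abel

theorem sum_sub_condExp_sum_ae_eq_sum_condExp_sub {Ω : Type*} {mΩ : MeasurableSpace Ω}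
    {μ : Measure Ω} [IsFiniteMeasure μ] {ℱ : ℤ → MeasurableSpace Ω} (hle : ∀ i, ℱ i ≤ mΩ)
    {X : ℕ → Ω → ℝ} (hint : ∀ j, Integrable (X j) μ)
    (hadapt : ∀ j : ℕ, StronglyMeasurable[ℱ j] (X j)) (n : ℕ) :
    (fun ω => (∑ j ∈ Finset.Icc 1 n, X j ω) - μ[fun ω' => ∑ j ∈ Finset.Icc 1 n, X j ω' | ℱ 0] ω)
      =ᵐ[μ] fun ω => ∑ j ∈ Finset.Icc 1 n,
        (μ[fun ω' => ∑ m ∈ Finset.Icc j n, X m ω' | ℱ j] ω -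
          μ[fun ω' => ∑ m ∈ Finset.Icc j n, X m ω' | ℱ ((j : ℤ) - 1)] ω) := by
  set A : ℕ → Ω → ℝ := fun j ω => ∑ m ∈ Finset.Icc j n, X m ω
  set C : ℕ → Ω → ℝ := fun i => μ[A (i + 1) | ℱ i]
  have hA : ∀ j, Integrable (A j) μ := fun j => integrable_finsetSum _ fun m _ => hint m
  have hstep : ∀ j ∈ Finset.Icc 1 n, ∀ᵐ ω ∂μ,
      μ[A j | ℱ j] ω - μ[A j | ℱ ((j : ℤ) - 1)] ω = X j ω + (C j ω - C (j - 1) ω) := by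
    intro j hj
    obtain ⟨hj1, hjn⟩ := Finset.mem_Icc.mp hj
    have hsplit : A j = X j + A (j + 1) := by
      ext ω
      simp only [A, Pi.add_apply]
      rw [Finset.Icc_eq_cons_Ioc hjn, Finset.sum_cons, ← Finset.Icc_add_one_left_eq_Ioc]
    have hpred : C (j - 1) = μ[A j | ℱ ((j : ℤ) - 1)] := by
      simp only [C, Nat.sub_add_cancel hj1, Nat.cast_pred hj1]
    filter_upwards [condExp_add (hint j) (hA (j + 1)) (ℱ j)] with ω hadd
    rw [← hpred, hsplit, hadd, Pi.add_apply,
      condExp_of_stronglyMeasurable (hle _) (hadapt j) (hint j)]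
    ring
  filter_upwards [Filter.eventually_all_finset _ |>.2 hstep] with ω hω
  have hCn : C n = 0 := by
    simp only [C, A, Finset.Icc_eq_empty_of_lt (Nat.lt_succ_self n), Finset.sum_empty]
    exact condExp_zero
  rw [Finset.sum_congr rfl hω, Finset.sum_add_distrib,
    Finset.sum_Icc_sub_pred (fun j => C j ω), hCn]
  simp [C, A, sub_eq_add_neg]

theorem Finset.sum_range_comp_iterate {Ω M : Type*} [AddCommMonoid M] (T : Ω → Ω) (f : Ω → M)
    (k j : ℕ) : (fun ω => ∑ i ∈ Finset.range k, f (T^[i] ω)) ∘ T^[j] =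
      fun ω => ∑ m ∈ Finset.Ico j (j + k), f (T^[m] ω) := by
  ext ω
  rw [Finset.sum_Ico_eq_sum_range, Nat.add_sub_cancel_left]
  simp only [Function.comp_apply, ← Function.iterate_add_apply, add_comm]

section Shift

variable {Ω : Type*} {mΩ : MeasurableSpace Ω} {μ : Measure Ω} {T : Ω → Ω}
  {ℱ : ℤ → MeasurableSpace Ω}

theorem comap_iterate_of_forall_succ_eq_comap (hshift : ∀ i, ℱ (i + 1) = (ℱ i).comap T)
    (i : ℤ) (j : ℕ) : ℱ (i + j) = (ℱ i).comap T^[j] := by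
  induction j with
  | zero => simp [MeasurableSpace.comap_id]
  | succ j ih =>
    rw [Nat.cast_succ, ← add_assoc, hshift, ih, MeasurableSpace.comap_comp,
      Function.iterate_succ]

theorem MeasureTheory.StronglyMeasurable.comp_iterate_of_forall_succ_eq_comap
    (hshift : ∀ i, ℱ (i + 1) = (ℱ i).comap T) {i : ℤ} {g : Ω → ℝ}
    (hg : StronglyMeasurable[ℱ i] g) (j : ℕ) : StronglyMeasurable[ℱ (i + j)] (g ∘ T^[j]) := by
  rw [comap_iterate_of_forall_succ_eq_comap hshift]
  exact hg.comp_measurable (comap_measurable _)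

variable [IsFiniteMeasure μ]

theorem condExp_comp_iterate_ae_eq (hT : MeasurePreserving T μ μ) (hle : ∀ i, ℱ i ≤ mΩ)
    (hshift : ∀ i, ℱ (i + 1) = (ℱ i).comap T) (i : ℤ) (j : ℕ) {g : Ω → ℝ}
    (hg : Integrable g μ) : μ[g ∘ T^[j] | ℱ (i + j)] =ᵐ[μ] μ[g | ℱ i] ∘ T^[j] := by
  rw [comap_iterate_of_forall_succ_eq_comap hshift]
  exact condExp_comp_ae_eq_of_measurePreserving (hT.iterate j) (hle i) hg

theorem condExp_sub_condExp_comp_iterate_ae_eq (hT : MeasurePreserving T μ μ)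
    (hle : ∀ i, ℱ i ≤ mΩ) (hshift : ∀ i, ℱ (i + 1) = (ℱ i).comap T) (i : ℤ) (j : ℕ)
    {g : Ω → ℝ} (hg : Integrable g μ) :
    (μ[g | ℱ i] - μ[g | ℱ (i - 1)]) ∘ T^[j] =ᵐ[μ]
      μ[g ∘ T^[j] | ℱ (i + j)] - μ[g ∘ T^[j] | ℱ (i + j - 1)] := by
  have h := condExp_comp_iterate_ae_eq hT hle hshift (i - 1) j hg
  rw [sub_add_eq_add_sub] at h
  filter_upwards [condExp_comp_iterate_ae_eq hT hle hshift i j hg, h] with ω h₀ h₁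
  simp only [Pi.sub_apply, Function.comp_apply] at h₀ h₁ ⊢
  rw [h₀, h₁]

theorem condExp_sub_condExp_sum_range_comp_iterate_ae_eq (hT : MeasurePreserving T μ μ)
    (hle : ∀ i, ℱ i ≤ mΩ) (hshift : ∀ i, ℱ (i + 1) = (ℱ i).comap T) {f : Ω → ℝ}
    (hf : Integrable f μ) {n j : ℕ} (hjn : j ≤ n) :
    (μ[fun ω => ∑ i ∈ Finset.range (n - j + 1), f (T^[i] ω) | ℱ 0] -
        μ[fun ω => ∑ i ∈ Finset.range (n - j + 1), f (T^[i] ω) | ℱ (-1)]) ∘ T^[j] =ᵐ[μ]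
      μ[fun ω => ∑ m ∈ Finset.Icc j n, f (T^[m] ω) | ℱ j] -
        μ[fun ω => ∑ m ∈ Finset.Icc j n, f (T^[m] ω) | ℱ ((j : ℤ) - 1)] := by
  have hsum := Finset.sum_range_comp_iterate T f (n - j + 1) j
  rw [show j + (n - j + 1) = n + 1 by omega, Finset.Ico_add_one_right_eq_Icc] at hsum
  have hint : Integrable (fun ω => ∑ i ∈ Finset.range (n - j + 1), f (T^[i] ω)) μ :=
    integrable_finsetSum _ fun i _ => (hT.iterate i).integrable_comp_of_integrable hf
  have h := condExp_sub_condExp_comp_iterate_ae_eq hT hle hshift 0 j hint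
  rwa [hsum, zero_sub, zero_add] at h

theorem condExp_comp_iterate_ae_eq_zero (hT : MeasurePreserving T μ μ) (hle : ∀ i, ℱ i ≤ mΩ)
    (hshift : ∀ i, ℱ (i + 1) = (ℱ i).comap T) {i : ℤ} {g : Ω → ℝ} (hg : Integrable g μ)
    (hg0 : μ[g | ℱ i] =ᵐ[μ] 0) (j : ℕ) : μ[g ∘ T^[j] | ℱ (i + j)] =ᵐ[μ] 0 :=
  (condExp_comp_iterate_ae_eq hT hle hshift i j hg).trans
    ((hT.iterate j).quasiMeasurePreserving.ae_eq_comp hg0)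

end Shift

theorem coboundary_paper_stmt10_general
    {Ω : Type*} {mΩ : MeasurableSpace Ω} (μ : Measure Ω) [IsProbabilityMeasure μ]
    (T : Ω ≃ᵐ Ω) (hT : Ergodic T μ)
    (ℱ : ℤ → MeasurableSpace Ω) (hle : ∀ i, ℱ i ≤ mΩ) (hmono : Monotone ℱ)
    (hshift : ∀ i, ℱ (i + 1) = (ℱ i).comap T)
    (f : Ω → ℝ) (hf2 : MemLp f 2 μ)
    (hfmeas : StronglyMeasurable[ℱ 0] f)
    (gk : ℕ → Ω → ℝ)
    (hgk : ∀ k, gk k =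
      (μ[(fun ω => ∑ j ∈ Finset.range k, f ((⇑T)^[j] ω)) | ℱ 0]) -
        (μ[(fun ω => ∑ j ∈ Finset.range k, f ((⇑T)^[j] ω)) | ℱ (-1)])) :
    (∀ n : ℕ, 1 ≤ n →
      (fun ω => (∑ j ∈ Finset.Icc 1 n, f ((⇑T)^[j] ω)) -
          (μ[(fun ω' => ∑ j ∈ Finset.Icc 1 n, f ((⇑T)^[j] ω')) | ℱ 0]) ω)
        =ᵐ[μ] fun ω => ∑ j ∈ Finset.Icc 1 n, gk (n - j + 1) ((⇑T)^[j] ω)) ∧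
    (∀ n : ℕ, ∀ j : ℕ, 1 ≤ j → j ≤ n →
      AEStronglyMeasurable[ℱ j]
        (fun ω => gk (n - j + 1) ((⇑T)^[j] ω) / Real.sqrt n) μ ∧
      μ[(fun ω => gk (n - j + 1) ((⇑T)^[j] ω) / Real.sqrt n) | ℱ ((j : ℤ) - 1)]
        =ᵐ[μ] 0) := by
  have hμT : MeasurePreserving T μ μ := hT.toMeasurePreserving
  have hf : Integrable f μ := hf2.integrable one_le_two
  have hm : ℱ (-1) ≤ ℱ 0 := hmono (by norm_num)
  have hgk_meas (k : ℕ) : StronglyMeasurable[ℱ 0] (gk k) :=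
    hgk k ▸ stronglyMeasurable_condExp.sub (stronglyMeasurable_condExp.mono hm)
  have hgk_int (k : ℕ) : Integrable (gk k) μ :=
    hgk k ▸ integrable_condExp.sub integrable_condExp
  have hgk_mart (k : ℕ) : μ[gk k | ℱ (-1)] =ᵐ[μ] 0 :=
    hgk k ▸ condExp_condExp_sub_condExp_ae_eq_zero hm (hle 0) _
  refine ⟨fun n _ => ?_, fun n j _ _ => ?_⟩
  · have hfT_meas (j : ℕ) : StronglyMeasurable[ℱ j] fun ω => f ((⇑T)^[j] ω) := by
      have h := hfmeas.comp_iterate_of_forall_succ_eq_comap hshift j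
      rwa [zero_add] at h
    refine (sum_sub_condExp_sum_ae_eq_sum_condExp_sub hle
      (fun j => (hμT.iterate j).integrable_comp_of_integrable hf) hfT_meas n).trans ?_
    filter_upwards [Filter.eventually_all_finset _ |>.2 fun j hj => hgk (n - j + 1) ▸
      condExp_sub_condExp_sum_range_comp_iterate_ae_eq hμT hle hshift hf
        (Finset.mem_Icc.mp hj).2] with ω hω
    exact (Finset.sum_congr rfl hω).symm
  · have hmeas : StronglyMeasurable[ℱ j] fun ω => gk (n - j + 1) ((⇑T)^[j] ω) := by
      have h := (hgk_meas (n - j + 1)).comp_iterate_of_forall_succ_eq_comap hshift j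
      rwa [zero_add] at h
    have hmart : μ[fun ω => gk (n - j + 1) ((⇑T)^[j] ω) | ℱ ((j : ℤ) - 1)] =ᵐ[μ] 0 := by
      have h := condExp_comp_iterate_ae_eq_zero hμT hle hshift (hgk_int (n - j + 1))
        (hgk_mart (n - j + 1)) j
      rwa [neg_add_eq_sub] at h
    refine ⟨(hmeas.measurable.div_const _).stronglyMeasurable.aestronglyMeasurable,
      (condExp_div_const _ _).trans ?_⟩
    filter_upwards [hmart] with ω hω
    simp [hω]

/-- Under Hannan's condition, the decomposition
`Sₙ(f) - E(Sₙ(f)|ℱ₀) = ∑_{j=1}^n Uʲ g_{n-j+1}` holds with `g_k = P₀(U⁻¹S_k(f))`,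
and the summands `Y_{n,j} = Uʲg_{n-j+1}/√n` form a martingale difference array
with respect to the filtration `(ℱⱼ)`. -/
theorem coboundary_paper_stmt10
    {Ω : Type*} {mΩ : MeasurableSpace Ω} (μ : Measure Ω) [IsProbabilityMeasure μ]
    (T : Ω ≃ᵐ Ω) (hT : Ergodic T μ)
    (ℱ : ℤ → MeasurableSpace Ω) (hle : ∀ i, ℱ i ≤ mΩ) (hmono : Monotone ℱ)
    (hshift : ∀ i, ℱ (i + 1) = (ℱ i).comap T)
    (f : Ω → ℝ) (hf2 : MemLp f 2 μ) (hf0 : ∫ ω, f ω ∂μ = 0)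
    (hfmeas : StronglyMeasurable[ℱ 0] f)
    (htail : μ[f | ⨅ i : ℤ, ℱ i] =ᵐ[μ] 0)
    (hannan : ∑' k : ℕ,
      eLpNorm (μ[f | ℱ (-(k : ℤ))] - μ[f | ℱ (-(k : ℤ) - 1)]) 2 μ ≠ ⊤)
    (gk : ℕ → Ω → ℝ)
    (hgk : ∀ k, gk k =
      (μ[(fun ω => ∑ j ∈ Finset.range k, f ((⇑T)^[j] ω)) | ℱ 0]) -
        (μ[(fun ω => ∑ j ∈ Finset.range k, f ((⇑T)^[j] ω)) | ℱ (-1)])) :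
    (∀ n : ℕ, 1 ≤ n →
      (fun ω => (∑ j ∈ Finset.Icc 1 n, f ((⇑T)^[j] ω)) -
          (μ[(fun ω' => ∑ j ∈ Finset.Icc 1 n, f ((⇑T)^[j] ω')) | ℱ 0]) ω)
        =ᵐ[μ] fun ω => ∑ j ∈ Finset.Icc 1 n, gk (n - j + 1) ((⇑T)^[j] ω)) ∧
    (∀ n : ℕ, ∀ j : ℕ, 1 ≤ j → j ≤ n →
      AEStronglyMeasurable[ℱ j]
        (fun ω => gk (n - j + 1) ((⇑T)^[j] ω) / Real.sqrt n) μ ∧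
      μ[(fun ω => gk (n - j + 1) ((⇑T)^[j] ω) / Real.sqrt n) | ℱ ((j : ℤ) - 1)]
        =ᵐ[μ] 0) :=
  coboundary_paper_stmt10_general μ T hT ℱ hle hmono hshift f hf2 hfmeas gk hgk
end

section
/- Let ℓₖ = 2ᵏ and suppose ‖Sₙ(f)‖₂² ≤ 4 Σ_{k: 2ᵏ ≤ n} 2ᵏ/k + 4 Σ_{k: 2ᵏ > n} n²/(k 2ᵏ) for all n. Then ‖Sₙ(f)‖₂² = o(n) as n → ∞. -/
/-!
Put `m = ⌊log₂ n⌋`, so `2 ^ m ≤ n < 2 ^ (m + 1)`. In the first sum, the terms with `k ≤ m / 2`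
add up to at most `2 ^ (m / 2 + 1) ≤ 2 √n`, while for `k > m / 2` one has `1 / k ≤ 2 / (m + 1)`,
so those add up to at most `4 · 2 ^ m / (m + 1) ≤ 4 n / (m + 1)`. In the second sum only the terms
with `k ≥ m` are nonzero, and `n < 2 ^ (m + 1)` bounds them by `n / (m + 1) · 2 ^ (m - k)`, a
geometric series summing to `2 n / (m + 1)`. Hence `S n ≤ 8 √n + 24 n / (m + 1) = o(n)`.
-/

open Filter Asymptotics Finset

lemma filter_pow_le_eq_Icc_log {b : ℕ} (hb : 1 < b) (n : ℕ) :
    (Icc 1 n).filter (fun k => b ^ k ≤ n) = Icc 1 (Nat.log b n) := by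
  rcases eq_or_ne n 0 with rfl | hn
  · simp
  ext k
  simp only [mem_filter, mem_Icc, Nat.le_log_iff_pow_le hb hn]
  exact ⟨fun ⟨⟨h1, _⟩, h⟩ => ⟨h1, h⟩, fun ⟨h1, h⟩ => ⟨⟨h1, (Nat.lt_pow_self hb).le.trans h⟩, h⟩⟩

lemma tendsto_natLog_atTop {b : ℕ} (hb : 1 < b) : Tendsto (Nat.log b) atTop atTop :=
  tendsto_atTop_atTop.2 fun K => ⟨b ^ K, fun _ hn => Nat.le_log_of_pow_le hb hn⟩

lemma isLittleO_sqrt_natCast :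
    (fun n : ℕ => √(n : ℝ)) =o[atTop] fun n : ℕ => (n : ℝ) :=
  isLittleO_iff_exists_eq_mul.2 ⟨fun n => (√(n : ℝ))⁻¹,
    tendsto_inv_atTop_zero.comp (Real.tendsto_sqrt_atTop.comp tendsto_natCast_atTop_atTop),
    Eventually.of_forall fun n => by simp [← div_eq_inv_mul, Real.div_sqrt]⟩

lemma isLittleO_div_natLog_add_one {b : ℕ} (hb : 1 < b) :
    (fun n : ℕ => (n : ℝ) / (Nat.log b n + 1)) =o[atTop] fun n : ℕ => (n : ℝ) :=
  isLittleO_iff_exists_eq_mul.2 ⟨fun n => ((Nat.log b n : ℝ) + 1)⁻¹,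
    tendsto_inv_atTop_zero.comp <| tendsto_atTop_add_const_right _ 1 <|
      tendsto_natCast_atTop_atTop.comp (tendsto_natLog_atTop hb),
    Eventually.of_forall fun n => by simp [div_eq_inv_mul]⟩

lemma two_pow_log_div_two_le_sqrt {n : ℕ} (hn : n ≠ 0) :
    (2 : ℝ) ^ (Nat.log 2 n / 2) ≤ √(n : ℝ) := by
  refine Real.le_sqrt_of_sq_le ?_
  calc ((2 : ℝ) ^ (Nat.log 2 n / 2)) ^ 2 = 2 ^ (2 * (Nat.log 2 n / 2)) := by ring
    _ ≤ 2 ^ Nat.log 2 n := pow_le_pow_right₀ one_le_two (Nat.mul_div_le _ _)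
    _ ≤ n := by exact_mod_cast Nat.pow_log_le_self 2 hn

lemma sum_Ioc_two_pow_le (a b : ℕ) : ∑ k ∈ Ioc a b, (2 : ℝ) ^ k ≤ 2 ^ (b + 1) := by
  calc ∑ k ∈ Ioc a b, (2 : ℝ) ^ k ≤ ∑ k ∈ range (b + 1), (2 : ℝ) ^ k :=
        sum_le_sum_of_subset_of_nonneg
          (fun k hk => by simp only [mem_Ioc, mem_range] at hk ⊢; omega) (by intros; positivity)
    _ = 2 ^ (b + 1) - 1 := by rw [geom_sum_eq (by norm_num : (2 : ℝ) ≠ 1)]; ring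
    _ ≤ 2 ^ (b + 1) := by linarith

lemma sum_Icc_two_pow_div_le (m : ℕ) :
    ∑ k ∈ Icc 1 m, (2 : ℝ) ^ k / k ≤ 2 * 2 ^ (m / 2) + 4 * (2 ^ m / (m + 1)) := by
  rw [show Icc 1 m = Ioc 0 m from Icc_succ_left_eq_Ioc 0 m,
    ← sum_Ioc_consecutive _ (Nat.zero_le (m / 2)) (Nat.div_le_self m 2)]
  gcongr ?_ + ?_
  · calc ∑ k ∈ Ioc 0 (m / 2), (2 : ℝ) ^ k / k ≤ ∑ k ∈ Ioc 0 (m / 2), (2 : ℝ) ^ k :=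
          sum_le_sum fun k hk => div_le_self (by positivity) (by exact_mod_cast (mem_Ioc.1 hk).1)
      _ ≤ 2 ^ (m / 2 + 1) := sum_Ioc_two_pow_le _ _
      _ = 2 * 2 ^ (m / 2) := by ring
  · calc ∑ k ∈ Ioc (m / 2) m, (2 : ℝ) ^ k / k
          ≤ ∑ k ∈ Ioc (m / 2) m, 2 / (m + 1) * (2 : ℝ) ^ k := by
          refine sum_le_sum fun k hk => ?_
          have hmk : (m : ℝ) + 1 ≤ 2 * k := by exact_mod_cast (by have := (mem_Ioc.1 hk).1; omega)
          rw [div_mul_eq_mul_div, div_le_div_iff₀ (by linarith) (by positivity)]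
          nlinarith [pow_pos (two_pos (α := ℝ)) k]
      _ = 2 / (m + 1) * ∑ k ∈ Ioc (m / 2) m, (2 : ℝ) ^ k := (mul_sum _ _ _).symm
      _ ≤ 2 / (m + 1) * 2 ^ (m + 1) := by gcongr; exact sum_Ioc_two_pow_le _ _
      _ = 4 * (2 ^ m / (m + 1)) := by ring

lemma tsum_ite_lt_two_pow_le (n : ℕ) :
    ∑' k : ℕ, (if n < 2 ^ (k + 1) then (n : ℝ) ^ 2 / ((k + 1) * 2 ^ (k + 1)) else 0) ≤
      2 * ((n : ℝ) / (Nat.log 2 n + 1)) := by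
  set m := Nat.log 2 n
  set f : ℕ → ℝ := fun k => if n < 2 ^ (k + 1) then (n : ℝ) ^ 2 / ((k + 1) * 2 ^ (k + 1)) else 0
  have hf0 : ∀ k, 0 ≤ f k := fun k => by simp only [f]; split <;> positivity
  have hhead : ∀ k < m, f k = 0 := fun k hk => by
    have hn : n ≠ 0 := by rintro rfl; simp [m] at hk
    simp [f, Nat.pow_le_of_le_log hn hk]
  have htail : ∀ k, f (k + m) ≤ (n : ℝ) / (m + 1) * (1 / 2) ^ k := fun k => by
    have hn : (n : ℝ) < 2 ^ (m + 1) := by exact_mod_cast Nat.lt_pow_succ_log_self one_lt_two n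
    simp only [f]
    split
    · calc (n : ℝ) ^ 2 / ((↑(k + m) + 1) * 2 ^ (k + m + 1))
            ≤ n ^ 2 / ((m + 1) * 2 ^ (k + m + 1)) := by
            gcongr; linarith [k.cast_nonneg (α := ℝ)]
        _ = (n : ℝ) / (m + 1) * (n / 2 ^ (m + 1)) * (1 / 2) ^ k := by
            rw [one_div_pow, show k + m + 1 = k + (m + 1) by ring, pow_add]; field_simp
        _ ≤ (n : ℝ) / (m + 1) * 1 * (1 / 2) ^ k := by
            gcongr; exact div_le_one_of_le₀ hn.le (by positivity)
        _ = (n : ℝ) / (m + 1) * (1 / 2) ^ k := by ring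
    · positivity
  have hsum_tail : Summable fun k => f (k + m) :=
    .of_nonneg_of_le (fun k => hf0 _) htail (summable_geometric_two.mul_left _)
  show ∑' k, f k ≤ _
  calc ∑' k, f k = ∑' k, f (k + m) := by
        rw [← ((summable_nat_add_iff m).1 hsum_tail).sum_add_tsum_nat_add m,
          sum_eq_zero fun k hk => hhead k (mem_range.1 hk), zero_add]
    _ ≤ ∑' k, (n : ℝ) / (m + 1) * (1 / 2) ^ k :=
        hsum_tail.tsum_le_tsum htail (summable_geometric_two.mul_left _)
    _ = 2 * ((n : ℝ) / (m + 1)) := by rw [tsum_mul_left, tsum_geometric_two, mul_comm]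

/-- If `‖Sₙ(f)‖₂²` (a nonnegative quantity `S n`) satisfies
`S n ≤ 4 ∑_{k ≥ 1, 2ᵏ ≤ n} 2ᵏ/k + 4 ∑_{k ≥ 1, 2ᵏ > n} n²/(k2ᵏ)` for all `n ≥ 1`,
then `S n = o(n)` as `n → ∞`. -/
theorem coboundary_paper_stmt19
    (S : ℕ → ℝ) (hS0 : ∀ n, 0 ≤ S n)
    (hbound : ∀ n : ℕ, 1 ≤ n →
      S n ≤ 4 * (∑ k ∈ (Finset.Icc 1 n).filter (fun k => 2 ^ k ≤ n),
          ((2 : ℝ) ^ k / k)) +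
        4 * ∑' k : ℕ, (if n < 2 ^ (k + 1) then
          (n : ℝ) ^ 2 / ((k + 1) * 2 ^ (k + 1)) else 0)) :
    (fun n : ℕ => S n) =o[atTop] (fun n : ℕ => (n : ℝ)) := by
  have hS : ∀ n ≠ 0, S n ≤ 8 * √(n : ℝ) + 24 * ((n : ℝ) / (Nat.log 2 n + 1)) := fun n hn => by
    have h := hbound n (Nat.one_le_iff_ne_zero.2 hn)
    rw [filter_pow_le_eq_Icc_log one_lt_two] at h
    have hpow : (2 : ℝ) ^ Nat.log 2 n / (Nat.log 2 n + 1) ≤ n / (Nat.log 2 n + 1) := by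
      gcongr; exact_mod_cast Nat.pow_log_le_self 2 hn
    linarith [sum_Icc_two_pow_div_le (Nat.log 2 n), two_pow_log_div_two_le_sqrt hn,
      tsum_ite_lt_two_pow_le n]
  have hbig : (fun n : ℕ => S n) =O[atTop]
      fun n : ℕ => 8 * √(n : ℝ) + 24 * ((n : ℝ) / (Nat.log 2 n + 1)) := by
    refine IsBigO.of_bound' ?_
    filter_upwards [eventually_ne_atTop 0] with n hn
    rw [Real.norm_of_nonneg (hS0 n)]
    exact (hS n hn).trans (le_abs_self _)
  exact hbig.trans_isLittleO <| (isLittleO_sqrt_natCast.const_mul_left 8).add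
    ((isLittleO_div_natLog_add_one one_lt_two).const_mul_left 24)
end
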